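/- arXiv:1806.05826 — 2 statements merged into one kernel-verified Lean document; each statement's English description precedes it below -/
import Mathlib

section
/- Under the ideal clustering assumption, the two-level iteration matrix T = (I − ω A)(I − P A_c^{-1} P^T A) with A = X^T X + β I, A_c = P^T A P, and P the normalized aggregation matrix, annihilates every eigenvector of X^T X with nonzero eigenvalue: if X^T X v = λ v with λ ≠ 0 then T v = 0. -/
open Matrix

/-!
Since the columns of `X` are constant on clusters, so is every row of `Xᵀ X`; hence an eigenvector
`v` of `Xᵀ X` with `λ ≠ 0`, being `λ⁻¹ Xᵀ X v`, is constant on clusters, i.e. `v = P w`.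
The coarse correction `I - P A_c⁻¹ Pᵀ A` is the identity minus the `A`-orthogonal projection onto
the range of `P`, so it kills `P w`; `A_c` is invertible because `A` is positive definite and `P`
is injective.
-/

theorem eq_comp_of_submatrix_mulVec_eq_smul {ι κ R : Type*} [Field R] [Fintype ι]
    {M : Matrix κ ι R} {c : ι → κ} {v : ι → R} {lam : R} (hlam : lam ≠ 0)
    (h : M.submatrix c id *ᵥ v = lam • v) :
    v = (lam⁻¹ • (M *ᵥ v)) ∘ c := by
  rw [← inv_smul_eq_iff₀ hlam] at h
  exact h.symm

variable {ι κ R : Type*} [Fintype κ] [DecidableEq κ]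

def aggregationMatrix [Zero R] (c : ι → κ) (s : κ → R) : Matrix ι κ R :=
  of fun i S => if c i = S then s S else 0

theorem aggregationMatrix_mulVec_apply [NonUnitalNonAssocSemiring R] (c : ι → κ) (s : κ → R)
    (w : κ → R) (i : ι) : (aggregationMatrix c s *ᵥ w) i = s (c i) * w (c i) := by
  simp [aggregationMatrix, mulVec, dotProduct, ite_mul]

theorem aggregationMatrix_mulVec_inv_mul [DivisionRing R] (c : ι → κ) {s : κ → R}
    (hs : ∀ S, s S ≠ 0) (u : κ → R) :
    aggregationMatrix c s *ᵥ (fun S => (s S)⁻¹ * u S) = u ∘ c := by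
  ext i
  rw [aggregationMatrix_mulVec_apply, mul_inv_cancel_left₀ (hs (c i)), Function.comp_apply]

theorem aggregationMatrix_mulVec_injective [NonUnitalNonAssocSemiring R] [IsLeftCancelMulZero R]
    {c : ι → κ} (hc : Function.Surjective c) {s : κ → R} (hs : ∀ S, s S ≠ 0) :
    Function.Injective (aggregationMatrix c s).mulVec := by
  intro w w' h
  funext S
  obtain ⟨i, rfl⟩ := hc S
  have hi := congrFun h i
  rw [aggregationMatrix_mulVec_apply, aggregationMatrix_mulVec_apply] at hi
  exact mul_left_cancel₀ (hs (c i)) hi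

theorem coarseCorrection_mul_eq_self [Fintype ι] [CommRing R] {A : Matrix ι ι R}
    {P : Matrix ι κ R} (h : IsUnit (Pᵀ * A * P)) : P * (Pᵀ * A * P)⁻¹ * Pᵀ * A * P = P := by
  calc P * (Pᵀ * A * P)⁻¹ * Pᵀ * A * P = P * ((Pᵀ * A * P)⁻¹ * (Pᵀ * A * P)) := by
        simp only [Matrix.mul_assoc]
    _ = P := by rw [nonsing_inv_mul _ ((isUnit_iff_isUnit_det _).mp h), Matrix.mul_one]

/-- Under the ideal clustering assumption, the two-level
iteration matrix `T = (I − ω A)(I − P A_c⁻¹ Pᵀ A)` annihilates every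
eigenvector of `Xᵀ X` with nonzero eigenvalue. -/
theorem stmt12 (N F F_C : ℕ) (c : Fin F → Fin F_C) (hc : Function.Surjective c)
    (n : Fin F_C → ℕ)
    (hn : ∀ S, n S = (Finset.univ.filter fun i => c i = S).card)
    (x : Fin F_C → (Fin N → ℝ))
    (X : Matrix (Fin N) (Fin F) ℝ)
    (hX : ∀ i k, X k i = x (c i) k)
    (P : Matrix (Fin F) (Fin F_C) ℝ)
    (hP : ∀ i S, P i S = if c i = S then 1 / Real.sqrt (n S) else 0)
    (β : ℝ) (hβ : 0 < β) (ω : ℝ)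
    (A : Matrix (Fin F) (Fin F) ℝ)
    (hA : A = Xᵀ * X + β • (1 : Matrix (Fin F) (Fin F) ℝ))
    (Ac : Matrix (Fin F_C) (Fin F_C) ℝ) (hAc : Ac = Pᵀ * A * P)
    (T : Matrix (Fin F) (Fin F) ℝ)
    (hT : T = (1 - ω • A) * (1 - P * Ac⁻¹ * Pᵀ * A))
    (lam : ℝ) (hlam : lam ≠ 0) (v : Fin F → ℝ)
    (heig : (Xᵀ * X) *ᵥ v = lam • v) :
    T *ᵥ v = 0 := by
  have hs : ∀ S, 1 / √(n S : ℝ) ≠ 0 := fun S => by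
    obtain ⟨i, hi⟩ := hc S
    have : 0 < n S := hn S ▸ Finset.card_pos.2 ⟨i, by simp [hi]⟩
    positivity
  have hP' : P = aggregationMatrix c fun S => 1 / √(n S) := Matrix.ext hP
  have hXX : Xᵀ * X = (of x * X).submatrix c id := by
    ext i j
    simp [mul_apply, hX]
  obtain ⟨w, hv⟩ : ∃ w, v = P *ᵥ w := ⟨_, by
    rw [hP', aggregationMatrix_mulVec_inv_mul c hs,
      ← eq_comp_of_submatrix_mulVec_eq_smul hlam (hXX ▸ heig)]⟩
  have hA_pos : A.PosDef := by
    rw [hA, ← conjTranspose_eq_transpose_of_trivial]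
    exact PosDef.posSemidef_add (posSemidef_conjTranspose_mul_self X) (PosDef.one.smul hβ)
  have hAc_pos : Ac.PosDef := by
    rw [hAc, ← conjTranspose_eq_transpose_of_trivial]
    exact hA_pos.conjTranspose_mul_mul_same (hP' ▸ aggregationMatrix_mulVec_injective hc hs)
  rw [hT, hAc, hv, ← mulVec_mulVec, mulVec_mulVec w, Matrix.sub_mul, Matrix.one_mul,
    coarseCorrection_mul_eq_self (hAc ▸ hAc_pos.isUnit), sub_self, zero_mulVec, mulVec_zero]
end

section
/- Let A ∈ ℝ^{F×F} be symmetric positive definite and P ∈ ℝ^{F×F_C} with P^T P = I. If the range of P is an invariant subspace of A (A·range(P) ⊆ range(P)), then the two-level iteration matrix T = (I − ω A)(I − P (P^T A P)^{-1} P^T A) satisfies: range(P) ⊆ ker(T), and the nonzero eigenvalues of T are exactly the values (1 − ω μ) for μ an eigenvalue of A restricted to the A-invariant complement range(P)^⊥. -/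
open Matrix

/-!
The coarse correction `C = 1 - P (Pᵀ A P)⁻¹ Pᵀ A` satisfies `C P = 0`, so `T = (1 - ω A) C` kills
`range P`. As `A` is symmetric and leaves `range P` invariant, it also leaves `ker Pᵀ = (range P)ᗮ`
invariant; hence `C` is the identity on `ker Pᵀ`, where `T` acts as `1 - ω A`. Splitting
`v = P Pᵀ v + (v - P Pᵀ v)` shows that `T` maps into `ker Pᵀ`, so an eigenvector of `T` for a nonzero
eigenvalue lies in `ker Pᵀ` and is an eigenvector of `1 - ω A` there.
-/

namespace Matrix

variable {n m R : Type*} [Fintype n] [Fintype m] [CommRing R]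

theorem transpose_mulVec_mulVec_eq_zero_of_mulVec_mem_range {A : Matrix n n R} (hA : Aᵀ = A)
    {P : Matrix n m R} (hinv : ∀ w, ∃ u, A *ᵥ (P *ᵥ w) = P *ᵥ u) {v : n → R}
    (hv : Pᵀ *ᵥ v = 0) : Pᵀ *ᵥ (A *ᵥ v) = 0 := by
  refine dotProduct_eq_zero _ fun w => ?_
  obtain ⟨u, hu⟩ := hinv w
  calc Pᵀ *ᵥ (A *ᵥ v) ⬝ᵥ w = v ⬝ᵥ (A *ᵥ (P *ᵥ w)) := by
        rw [dotProduct_comm, dotProduct_mulVec, vecMul_transpose, dotProduct_mulVec,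
          ← mulVec_transpose, hA, dotProduct_comm]
    _ = Pᵀ *ᵥ v ⬝ᵥ u := by rw [hu, dotProduct_mulVec, ← mulVec_transpose, dotProduct_comm]
    _ = 0 := by rw [hv, zero_dotProduct]

variable [DecidableEq n] [DecidableEq m]

noncomputable def coarseCorrection (A : Matrix n n R) (P : Matrix n m R) : Matrix n n R :=
  1 - P * (Pᵀ * A * P)⁻¹ * Pᵀ * A

noncomputable def twoLevelIteration (ω : R) (A : Matrix n n R) (P : Matrix n m R) : Matrix n n R :=
  (1 - ω • A) * coarseCorrection A P

variable {A : Matrix n n R} {P : Matrix n m R}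

theorem coarseCorrection_mul_self (hAP : IsUnit (Pᵀ * A * P)) :
    coarseCorrection A P * P = 0 := by
  have hinv : (Pᵀ * A * P)⁻¹ * (Pᵀ * A * P) = 1 :=
    nonsing_inv_mul _ ((isUnit_iff_isUnit_det _).mp hAP)
  calc coarseCorrection A P * P
      = P - P * ((Pᵀ * A * P)⁻¹ * (Pᵀ * A * P)) := by
        simp only [coarseCorrection, Matrix.sub_mul, Matrix.one_mul, Matrix.mul_assoc]
    _ = 0 := by rw [hinv, Matrix.mul_one, sub_self]

theorem coarseCorrection_mulVec_of_transpose_mulVec_eq_zero {v : n → R}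
    (hv : Pᵀ *ᵥ (A *ᵥ v) = 0) : coarseCorrection A P *ᵥ v = v := by
  rw [coarseCorrection, sub_mulVec, one_mulVec, ← mulVec_mulVec, ← mulVec_mulVec, hv, mulVec_zero,
    sub_zero]

theorem twoLevelIteration_mul_self (ω : R) (hAP : IsUnit (Pᵀ * A * P)) :
    twoLevelIteration ω A P * P = 0 := by
  rw [twoLevelIteration, Matrix.mul_assoc, coarseCorrection_mul_self hAP, Matrix.mul_zero]

theorem twoLevelIteration_mulVec_of_transpose_mulVec_eq_zero (ω : R) {v : n → R}
    (hv : Pᵀ *ᵥ (A *ᵥ v) = 0) : twoLevelIteration ω A P *ᵥ v = v - ω • A *ᵥ v := by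
  rw [twoLevelIteration, ← mulVec_mulVec,
    coarseCorrection_mulVec_of_transpose_mulVec_eq_zero hv, sub_mulVec, one_mulVec,
    smul_mulVec]

theorem transpose_mulVec_twoLevelIteration_mulVec (ω : R) (hA : Aᵀ = A)
    (hP : Pᵀ * P = 1) (hinv : ∀ w, ∃ u, A *ᵥ (P *ᵥ w) = P *ᵥ u) (hAP : IsUnit (Pᵀ * A * P))
    (v : n → R) : Pᵀ *ᵥ (twoLevelIteration ω A P *ᵥ v) = 0 := by
  set u := v - P *ᵥ (Pᵀ *ᵥ v)
  have hu : Pᵀ *ᵥ u = 0 := by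
    rw [mulVec_sub, mulVec_mulVec, hP, one_mulVec, sub_self]
  have hAu := transpose_mulVec_mulVec_eq_zero_of_mulVec_mem_range hA hinv hu
  have hTv : twoLevelIteration ω A P *ᵥ v = u - ω • A *ᵥ u := by
    rw [← twoLevelIteration_mulVec_of_transpose_mulVec_eq_zero ω hAu, mulVec_sub,
      mulVec_mulVec _ (twoLevelIteration ω A P) P, twoLevelIteration_mul_self ω hAP, zero_mulVec,
      sub_zero]
  rw [hTv, mulVec_sub, mulVec_smul, hu, hAu, smul_zero, sub_zero]

end Matrix

theorem Matrix.PosDef.transpose_mul_mul_same_of_transpose_mul_self_eq_one {n m : Type*}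
    [Fintype n] [Fintype m] [DecidableEq m] {A : Matrix n n ℝ} (hA : A.PosDef)
    {P : Matrix n m ℝ} (hP : Pᵀ * P = 1) : (Pᵀ * A * P).PosDef := by
  have hinj : Function.Injective P.mulVec := fun x y hxy => by
    simpa only [mulVec_mulVec, hP, one_mulVec] using congrArg (Pᵀ *ᵥ ·) hxy
  simpa only [conjTranspose_eq_transpose_of_trivial] using hA.conjTranspose_mul_mul_same hinj

/-- With `A` SPD, `P` with orthonormal columns and `range(P)` an
`A`-invariant subspace, the two-level iteration matrix
`T = (I − ω A)(I − P (Pᵀ A P)⁻¹ Pᵀ A)` kills `range(P)`, and its nonzero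
eigenvalues are exactly the values `1 − ω μ` for `μ` an eigenvalue of `A`
restricted to the `A`-invariant complement `range(P)ᗮ` (vectors `v` with
`Pᵀ v = 0`). -/
theorem stmt18 (F F_C : ℕ) (A : Matrix (Fin F) (Fin F) ℝ) (hA : A.PosDef)
    (P : Matrix (Fin F) (Fin F_C) ℝ)
    (hP : Pᵀ * P = (1 : Matrix (Fin F_C) (Fin F_C) ℝ))
    (hinv : ∀ w : Fin F_C → ℝ, ∃ u : Fin F_C → ℝ, A *ᵥ (P *ᵥ w) = P *ᵥ u)
    (ω : ℝ) (hω : ω ≠ 0)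
    (T : Matrix (Fin F) (Fin F) ℝ)
    (hT : T = (1 - ω • A) * (1 - P * (Pᵀ * A * P)⁻¹ * Pᵀ * A)) :
    (∀ w : Fin F_C → ℝ, T *ᵥ (P *ᵥ w) = 0) ∧
      (∀ lam : ℝ, lam ≠ 0 →
        ((∃ v : Fin F → ℝ, v ≠ 0 ∧ T *ᵥ v = lam • v) ↔
          (∃ (μ : ℝ) (v : Fin F → ℝ), v ≠ 0 ∧ Pᵀ *ᵥ v = 0 ∧
            A *ᵥ v = μ • v ∧ lam = 1 - ω * μ))) := by
  change T = twoLevelIteration ω A P at hT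
  subst hT
  have hsymm : Aᵀ = A := by
    simpa only [conjTranspose_eq_transpose_of_trivial] using hA.isHermitian.eq
  have hAP := (hA.transpose_mul_mul_same_of_transpose_mul_self_eq_one hP).isUnit
  refine ⟨fun w => by rw [mulVec_mulVec, twoLevelIteration_mul_self ω hAP, zero_mulVec],
    fun lam hlam => ⟨?_, ?_⟩⟩
  · rintro ⟨v, hv0, hTv⟩
    have hv : Pᵀ *ᵥ v = 0 := by
      have := transpose_mulVec_twoLevelIteration_mulVec ω hsymm hP hinv hAP v
      rwa [hTv, mulVec_smul, smul_eq_zero, or_iff_right hlam] at this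
    have hAv := transpose_mulVec_mulVec_eq_zero_of_mulVec_mem_range hsymm hinv hv
    rw [twoLevelIteration_mulVec_of_transpose_mulVec_eq_zero ω hAv] at hTv
    refine ⟨(1 - lam) / ω, v, hv0, hv, ?_, by field_simp; ring⟩
    have hωAv : ω • A *ᵥ v = (1 - lam) • v := by
      rw [sub_smul, one_smul, ← hTv, sub_sub_cancel]
    rw [div_eq_inv_mul, ← smul_smul, ← hωAv, smul_smul, inv_mul_cancel₀ hω, one_smul]
  · rintro ⟨μ, v, hv0, hv, hAv, rfl⟩
    refine ⟨v, hv0, ?_⟩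
    rw [twoLevelIteration_mulVec_of_transpose_mulVec_eq_zero ω
      (transpose_mulVec_mulVec_eq_zero_of_mulVec_mem_range hsymm hinv hv), hAv, smul_smul,
      sub_smul, one_smul]
end
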